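/- arXiv:0804.0120 — 2 statements merged into one kernel-verified Lean document; each statement's English description precedes it below -/
import Mathlib

section
/- Let Γ be a two-dimensional complete sublattice of Z^{n+1} with two-dimensional fundamental volume R, and suppose ξ = (1,ξ_1,...,ξ_n) ∈ span(Γ). Then for any positive N, the first successive minimum of the cylinder C_ξ(N, N^{-1/n}) with respect to Z^{n+1} satisfies μ_1(ξ,N) ≤ N^{(1−n)/(2n)} · R^{1/2}. -/
open scoped Pointwise
open MeasureTheory Filter

noncomputable section

/-- `z ∈ ℝ^m` is an integer point. -/
def IsIntPoint {m : ℕ} (z : EuclideanSpace ℝ (Fin m)) : Prop := ∀ j, ∃ a : ℤ, z j = a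

/-- The cylinder `C_ξ(Q,σ) ⊂ ℝ^{n+1}`. -/
def cyl (n : ℕ) (ξ : Fin n → ℝ) (Q σ : ℝ) : Set (EuclideanSpace ℝ (Fin (n+1))) :=
  {z | |z 0| < Q ∧ Real.sqrt (∑ j, (z j.succ - ξ j * z 0) ^ 2) < σ}

/-- The `l`-th successive minimum of a body `C` with respect to `ℤ^{n+1}`. -/
def succMin (n l : ℕ) (C : Set (EuclideanSpace ℝ (Fin (n+1)))) : ℝ :=
  sInf {t : ℝ | 0 < t ∧ ∃ v : Fin l → EuclideanSpace ℝ (Fin (n+1)),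
    LinearIndependent ℝ v ∧ ∀ i, IsIntPoint (v i) ∧ v i ∈ t • C}

/-- `μ_l(ξ, N)`: successive minima of `ℤ^{n+1}` w.r.t. `C_ξ(N, N^{-1/n})`. -/
def mu (n l : ℕ) (ξ : Fin n → ℝ) (N : ℝ) : ℝ :=
  succMin n l (cyl n ξ N (N ^ (-1 / (n : ℝ))))

/-- The vector `(1, ξ_1, ..., ξ_n) ∈ ℝ^{n+1}`. -/
def embed (n : ℕ) (ξ : Fin n → ℝ) : EuclideanSpace ℝ (Fin (n+1)) :=
  WithLp.toLp 2 (Fin.cons 1 ξ : Fin (n+1) → ℝ)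

/-- `w_m`: the volume of the unit ball in `ℝ^m`. -/
def ballVol (m : ℕ) : ℝ := (volume (Metric.ball (0 : EuclideanSpace ℝ (Fin m)) 1)).toReal

/-- The `l`-dimensional fundamental volume of the lattice spanned by `b`. -/
def gramVol {m l : ℕ} (b : Fin l → EuclideanSpace ℝ (Fin m)) : ℝ :=
  Real.sqrt (Matrix.det (Matrix.of fun i j => (@inner ℝ _ _ (b i) (b j))))

/-- The lattice spanned by `b` is complete: it contains all integer points of its real span. -/
def IsCompleteLat {n l : ℕ} (b : Fin l → EuclideanSpace ℝ (Fin (n+1))) : Prop :=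
  ∀ z : EuclideanSpace ℝ (Fin (n+1)), IsIntPoint z →
    z ∈ Submodule.span ℝ (Set.range b) → z ∈ Submodule.span ℤ (Set.range b)

/-- `ξ` is `(L, γ, W)`-badly approximable for an `l`-dimensional lattice `L`:
for every `Q ≥ W` the cylinder `C_ξ(Q, γ Q^{-1/(l-1)})` has no nonzero point of `L`. -/
def IsBad (n l : ℕ) (L : Submodule ℤ (EuclideanSpace ℝ (Fin (n+1)))) (ξ : Fin n → ℝ)
    (γ W : ℝ) : Prop :=
  ∀ Q : ℝ, W ≤ Q → ∀ z ∈ L, z ≠ 0 → z ∉ cyl n ξ Q (γ * Q ^ (-1 / ((l : ℝ) - 1)))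


open Finset in
private lemma euclid_inner_eq {m : ℕ} (x y : EuclideanSpace ℝ (Fin m)) :
    (inner ℝ x y : ℝ) = ∑ i, x i * y i := by
  simp [PiLp.inner_apply, RCLike.inner_apply, starRingEnd_apply]
  exact Finset.sum_congr rfl fun i _ => mul_comm _ _

private lemma mem_smul_cyl_iff {n : ℕ} {ξ : Fin n → ℝ} {Q σ t : ℝ} (ht : 0 < t)
    (z : EuclideanSpace ℝ (Fin (n+1))) :
    z ∈ t • cyl n ξ Q σ ↔ |z 0| < t * Q ∧
      Real.sqrt (∑ j, (z j.succ - ξ j * z 0) ^ 2) < t * σ := by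
  rw [Set.mem_smul_set_iff_inv_smul_mem₀ ht.ne']
  have h1 : ∀ i : Fin (n+1), (t⁻¹ • z) i = t⁻¹ * z i := fun i => rfl
  have h3 : Real.sqrt ((t⁻¹)^2 * ∑ j, (z j.succ - ξ j * z 0) ^ 2)
      = t⁻¹ * Real.sqrt (∑ j, (z j.succ - ξ j * z 0) ^ 2) := by
    rw [Real.sqrt_mul (sq_nonneg _), Real.sqrt_sq (by positivity)]
  simp only [cyl, Set.mem_setOf_eq, h1]
  have h2 : ∑ j : Fin n, (t⁻¹ * z j.succ - ξ j * (t⁻¹ * z 0)) ^ 2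
      = (t⁻¹)^2 * ∑ j, (z j.succ - ξ j * z 0) ^ 2 := by
    rw [Finset.mul_sum]; exact Finset.sum_congr rfl fun j _ => by ring
  rw [h2, h3, abs_mul, abs_inv, abs_of_pos ht, inv_mul_lt_iff₀ ht, inv_mul_lt_iff₀ ht]

private lemma gram_posdef {m l : ℕ} (b : Fin l → EuclideanSpace ℝ (Fin m))
    (hb : LinearIndependent ℝ b) :
    (Matrix.of fun i j => (inner ℝ (b i) (b j) : ℝ)).PosDef := by
  classical
  rw [Matrix.posDef_iff_dotProduct_mulVec]
  constructor
  · ext i j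
    simp [Matrix.IsHermitian, Matrix.conjTranspose_apply, real_inner_comm, mul_comm]
  · intro x hx
    have hv : (∑ i, x i • b i) ≠ 0 := by
      intro h
      exact hx (funext fun i => (Fintype.linearIndependent_iff.1 hb x h i))
    have hkey : (dotProduct (star x)
        ((Matrix.of fun i j => (inner ℝ (b i) (b j) : ℝ)).mulVec x))
        = inner ℝ (∑ i, x i • b i) (∑ j, x j • b j) := by
      simp [dotProduct, Matrix.mulVec, sum_inner, inner_sum, real_inner_smul_left,
        real_inner_smul_right, Finset.mul_sum, Finset.sum_mul, -inner_self_eq_norm_sq_to_K]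
      rw [Finset.sum_comm]
      exact Finset.sum_congr rfl fun k _ => Finset.sum_congr rfl fun i _ => by ring
    rw [hkey, real_inner_self_eq_norm_sq]
    exact pow_pos (norm_pos_iff.mpr hv) 2

open Finset in
private lemma gram_transform {m : ℕ} (b c : Fin 2 → EuclideanSpace ℝ (Fin m))
    (M : Matrix (Fin 2) (Fin 2) ℝ) (h : ∀ i, c i = ∑ k, M i k • b k) :
    (Matrix.of fun i j => (inner ℝ (c i) (c j) : ℝ))
      = M * (Matrix.of fun i j => (inner ℝ (b i) (b j) : ℝ)) * M.transpose := by
  ext i j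
  simp only [Matrix.of_apply, Matrix.mul_apply, Matrix.transpose_apply, h, sum_inner, inner_sum,
    real_inner_smul_left, real_inner_smul_right, Finset.sum_mul, Finset.mul_sum]
  exact Finset.sum_congr rfl fun k _ => Finset.sum_congr rfl fun l _ => by ring

set_option maxHeartbeats 2000000 in
theorem mu_one_upper_two_dim (n : ℕ) (hn : 0 < n)
    (b : Fin 2 → EuclideanSpace ℝ (Fin (n+1))) (hbint : ∀ i, IsIntPoint (b i))
    (hbli : LinearIndependent ℝ b) (hbcomp : IsCompleteLat b)
    (ξ : Fin n → ℝ) (hξ : embed n ξ ∈ Submodule.span ℝ (Set.range b))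
    (N : ℝ) (hN : 0 < N) :
    mu n 1 ξ N ≤ N ^ ((1 - (n : ℝ)) / (2 * (n : ℝ))) * Real.sqrt (gramVol b) := by
  classical
  set σ : ℝ := N ^ (-1 / (n : ℝ)) with hσdef
  have hσ : 0 < σ := Real.rpow_pos_of_pos hN _
  set T : ℝ := N ^ ((1 - (n : ℝ)) / (2 * (n : ℝ))) * Real.sqrt (gramVol b) with hTdef
  have hT0 : 0 ≤ T := by positivity
  have key : ∀ t : ℝ, T < t → 0 < t ∧ ∃ v : Fin 1 → EuclideanSpace ℝ (Fin (n+1)),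
      LinearIndependent ℝ v ∧ ∀ i, IsIntPoint (v i) ∧ v i ∈ t • cyl n ξ N σ := by
    intro t ht
    have ht0 : 0 < t := lt_of_le_of_lt hT0 ht
    refine ⟨ht0, ?_⟩
    -- the vector e = (1, ξ)
    set e : EuclideanSpace ℝ (Fin (n+1)) := embed n ξ with hedef
    have he0 : e 0 = 1 := by
        show (Fin.cons 1 ξ : Fin (n+1) → ℝ) 0 = 1
        simp
    have heS : ∀ j : Fin n, e j.succ = ξ j := fun j => by
      show (Fin.cons 1 ξ : Fin (n+1) → ℝ) j.succ = ξ j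
      simp
    -- coordinates of e in the basis b
    obtain ⟨ce, hce⟩ := (Submodule.mem_span_range_iff_exists_fun (R := ℝ)).1 hξ
    have hce2 : ce 0 • b 0 + ce 1 • b 1 = e := by rwa [Fin.sum_univ_two] at hce
    -- the auxiliary vector u with u 0 = 0
    set u : EuclideanSpace ℝ (Fin (n+1)) := b 0 0 • b 1 - b 1 0 • b 0 with hudef
    have hu0 : u 0 = 0 := by
      show b 0 0 * b 1 0 - b 1 0 * b 0 0 = 0
      ring
    set cu : Fin 2 → ℝ := ![-(b 1 0), b 0 0] with hcudef
    have hcu2 : cu 0 • b 0 + cu 1 • b 1 = u := by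
      show (-(b 1 0)) • b 0 + (b 0 0) • b 1 = b 0 0 • b 1 - b 1 0 • b 0
      module
    have hune : u ≠ 0 := by
      intro h
      have hz := Fintype.linearIndependent_iff.1 hbli cu (by rw [Fin.sum_univ_two, hcu2]; exact h)
      have hb00 : b 0 0 = 0 := hz 1
      have hb10 : b 1 0 = 0 := by
        have h0 := hz 0
        rw [hcudef] at h0
        simpa using h0
      have : e 0 = ce 0 * b 0 0 + ce 1 * b 1 0 := by rw [← hce2]; rfl
      rw [he0, hb00, hb10] at this
      norm_num at this
    -- linear independence of (e, u)
    have heuLI : LinearIndependent ℝ ![e, u] := by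
      rw [linearIndependent_fin2]
      refine ⟨by simpa using hune, fun a hau => ?_⟩
      have : (a • u) 0 = e 0 := by rw [show (![e, u] : Fin 2 → _) 1 = u from rfl] at hau; rw [hau]; rfl
      rw [he0] at this
      have : a * u 0 = 1 := this
      rw [hu0, mul_zero] at this
      norm_num at this
    -- the coefficient matrix M
    set M : Matrix (Fin 2) (Fin 2) ℝ := Matrix.of ![ce, cu] with hMdef
    have hM : ∀ i, (![e, u] : Fin 2 → EuclideanSpace ℝ (Fin (n+1))) i = ∑ k, M i k • b k := by
      intro i
      fin_cases i
      · rw [Fin.sum_univ_two]; exact hce2.symm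
      · rw [Fin.sum_univ_two]; exact hcu2.symm
    -- linear map φ sending coordinates to vectors
    set φ : (Fin 2 → ℝ) →ₗ[ℝ] EuclideanSpace ℝ (Fin (n+1)) :=
      { toFun := fun x => x 0 • b 0 + x 1 • b 1
        map_add' := fun x y => by
          show (x 0 + y 0) • b 0 + (x 1 + y 1) • b 1 = _
          module
        map_smul' := fun c x => by
          show (c * x 0) • b 0 + (c * x 1) • b 1 = _
          show (c * x 0) • b 0 + (c * x 1) • b 1 = c • (x 0 • b 0 + x 1 • b 1)
          module } with hφdef
    have hφce : φ ce = e := hce2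
    have hφcu : φ cu = u := hcu2
    -- det M is nonzero
    have hMrows : LinearIndependent ℝ (fun i => M i) := by
      rw [Fintype.linearIndependent_iff]
      intro g hg
      have hφg : φ (∑ i, g i • M i) = 0 := by rw [hg]; exact map_zero φ
      rw [map_sum] at hφg
      have : ∑ i, g i • (![e, u] : Fin 2 → _) i = 0 := by
        rw [← hφg]
        refine Finset.sum_congr rfl fun i _ => ?_
        rw [_root_.map_smul]
        congr 1
        fin_cases i
        · exact hφce.symm
        · exact hφcu.symm
      exact Fintype.linearIndependent_iff.1 heuLI g this
    have hMdet : M.det ≠ 0 := by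
      have := Matrix.linearIndependent_rows_iff_isUnit.1 hMrows
      rw [Matrix.isUnit_iff_isUnit_det] at this
      exact this.ne_zero
    -- Gram matrices
    set G : Matrix (Fin 2) (Fin 2) ℝ := Matrix.of fun i j => (inner ℝ (b i) (b j) : ℝ) with hGdef
    have hGpos : 0 < G.det := (gram_posdef b hbli).det_pos
    have hGV : gramVol b = Real.sqrt G.det := rfl
    set G' : Matrix (Fin 2) (Fin 2) ℝ :=
      Matrix.of fun i j =>
        (inner ℝ ((![e, u] : Fin 2 → _) i) ((![e, u] : Fin 2 → _) j) : ℝ) with hG'def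
    have hG'eq : G' = M * G * M.transpose := gram_transform b ![e, u] M hM
    have hdet' : G'.det = M.det ^ 2 * G.det := by
      rw [hG'eq, Matrix.det_mul, Matrix.det_mul, Matrix.det_transpose]; ring
    -- U and its positivity
    set U : ℝ := ∑ j : Fin n, (u j.succ) ^ 2 with hUdef
    have hU0 : 0 < U := by
      have hex : ∃ i, u i ≠ 0 := by
        by_contra hc
        push_neg at hc
        exact hune (PiLp.ext hc)
      obtain ⟨i, hi⟩ := hex
      rcases Fin.eq_zero_or_eq_succ i with h0 | ⟨j, rfl⟩
      · rw [h0, hu0] at hi; exact absurd rfl hi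
      · have h1 : 0 < u j.succ ^ 2 := by rw [← sq_abs]; exact pow_pos (abs_pos.mpr hi) 2
        exact lt_of_lt_of_le h1
          (Finset.single_le_sum (fun j _ => sq_nonneg (u j.succ)) (Finset.mem_univ j))
    -- inner products
    have hee : (inner ℝ e e : ℝ) = 1 + ∑ j, ξ j ^ 2 := by
      rw [euclid_inner_eq, Fin.sum_univ_succ, he0, one_mul]
      congr 1
      exact Finset.sum_congr rfl fun j _ => by rw [heS, ← pow_two]
    have heu : (inner ℝ e u : ℝ) = ∑ j, ξ j * u j.succ := by
      rw [euclid_inner_eq, Fin.sum_univ_succ, hu0, mul_zero, zero_add]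
      exact Finset.sum_congr rfl fun j _ => by rw [heS]
    have huu : (inner ℝ u u : ℝ) = U := by
      rw [euclid_inner_eq, Fin.sum_univ_succ, hu0, mul_zero, zero_add, hUdef]
      exact Finset.sum_congr rfl fun j _ => (pow_two (u j.succ)).symm
    have hue : (inner ℝ u e : ℝ) = ∑ j, ξ j * u j.succ := by rw [real_inner_comm]; exact heu
    have hdet2 : G'.det = (1 + ∑ j, ξ j ^ 2) * U - (∑ j, ξ j * u j.succ) ^ 2 := by
      rw [Matrix.det_fin_two]
      have h00 : G' 0 0 = (inner ℝ e e : ℝ) := rfl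
      have h01 : G' 0 1 = (inner ℝ e u : ℝ) := rfl
      have h10 : G' 1 0 = (inner ℝ u e : ℝ) := rfl
      have h11 : G' 1 1 = (inner ℝ u u : ℝ) := rfl
      rw [h00, h01, h10, h11, hee, heu, hue, huu]
      ring
    have hCS : (∑ j, ξ j * u j.succ) ^ 2 ≤ (∑ j, ξ j ^ 2) * U :=
      Finset.sum_mul_sq_le_sq_mul_sq Finset.univ ξ (fun j => u j.succ)
    have hG'U : U ≤ G'.det := by rw [hdet2]; nlinarith [hCS, hU0]
    have hsG : 0 < Real.sqrt G.det := Real.sqrt_pos.2 hGpos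
    have hsU : 0 < Real.sqrt U := Real.sqrt_pos.2 hU0
    have hdetM : Real.sqrt U / Real.sqrt G.det ≤ |M.det| := by
      rw [div_le_iff₀ hsG]
      calc Real.sqrt U ≤ Real.sqrt G'.det := Real.sqrt_le_sqrt hG'U
        _ = |M.det| * Real.sqrt G.det := by
          rw [hdet', Real.sqrt_mul (sq_nonneg _), Real.sqrt_sq_eq_abs]
    -- the plane geometry
    set ρ : ℝ := t * σ / Real.sqrt U with hρdef
    have hρ0 : 0 < ρ := div_pos (mul_pos ht0 hσ) hsU
    set rect : Set (Fin 2 → ℝ) :=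
      Set.univ.pi ![Set.Ioo (-(t*N)) (t*N), Set.Ioo (-ρ) ρ] with hrectdef
    set ψ : (Fin 2 → ℝ) →ₗ[ℝ] (Fin 2 → ℝ) := Matrix.toLin' M.transpose with hψdef
    have hψapp : ∀ y : Fin 2 → ℝ, ψ y = y 0 • ce + y 1 • cu := by
      intro y
      funext k
      show M.transpose.mulVec y k = _
      simp only [Matrix.mulVec, dotProduct, Matrix.transpose_apply, Fin.sum_univ_two,
        hMdef, Matrix.of_apply, Matrix.cons_val_zero, Matrix.cons_val_one, Matrix.head_cons,
        Pi.add_apply, Pi.smul_apply, smul_eq_mul]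
      ring
    have hφψ : ∀ y : Fin 2 → ℝ, φ (ψ y) = y 0 • e + y 1 • u := by
      intro y
      rw [hψapp, map_add, _root_.map_smul, _root_.map_smul, hφce, hφcu]
    have hcomb0 : ∀ a c : ℝ, (a • e + c • u) 0 = a := by
      intro a c
      show a * e 0 + c * u 0 = a
      rw [he0, hu0]; ring
    have hcombS : ∀ (a c : ℝ) (j : Fin n),
        (a • e + c • u) j.succ - ξ j * ((a • e + c • u) 0) = c * u j.succ := by
      intro a c j
      have h1 : (a • e + c • u) j.succ = a * ξ j + c * u j.succ := by
        show a * e j.succ + c * u j.succ = _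
        rw [heS]
      rw [h1, hcomb0]; ring
    have hmem : ∀ y ∈ rect, φ (ψ y) ∈ t • cyl n ξ N σ := by
      intro y hy
      have hy0 : y 0 ∈ Set.Ioo (-(t*N)) (t*N) := hy 0 (Set.mem_univ 0)
      have hy1 : y 1 ∈ Set.Ioo (-ρ) ρ := hy 1 (Set.mem_univ 1)
      rw [hφψ, mem_smul_cyl_iff ht0]
      constructor
      · rw [hcomb0]; exact abs_lt.2 ⟨hy0.1, hy0.2⟩
      · have hsum : ∑ j, ((y 0 • e + y 1 • u) j.succ - ξ j * ((y 0 • e + y 1 • u) 0)) ^ 2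
            = (y 1)^2 * U := by
          rw [hUdef, Finset.mul_sum]
          exact Finset.sum_congr rfl fun j _ => by rw [hcombS]; ring
        rw [hsum, Real.sqrt_mul (sq_nonneg _), Real.sqrt_sq_eq_abs]
        have h1 : |y 1| < ρ := abs_lt.2 ⟨hy1.1, hy1.2⟩
        calc |y 1| * Real.sqrt U < ρ * Real.sqrt U := mul_lt_mul_of_pos_right h1 hsU
          _ = t * σ := by rw [hρdef]; field_simp
    set s : Set (Fin 2 → ℝ) := ψ '' rect with hsdef
    have hconv : Convex ℝ s := by
      refine Convex.linear_image ?_ ψ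
      refine convex_pi fun i _ => ?_
      fin_cases i
      · exact convex_Ioo _ _
      · exact convex_Ioo _ _
    have hsymm : ∀ x ∈ s, -x ∈ s := by
      rintro x ⟨y, hy, rfl⟩
      refine ⟨-y, ?_, map_neg ψ y⟩
      intro i _
      have h := hy i (Set.mem_univ i)
      fin_cases i <;>
      · simp only [Matrix.cons_val_zero, Matrix.cons_val_one, Matrix.head_cons, Set.mem_Ioo,
          Pi.neg_apply] at h ⊢
        constructor <;> linarith [h.1, h.2]
    -- volumes
    have hvrect : volume rect = ENNReal.ofReal (2*(t*N)) * ENNReal.ofReal (2*ρ) := by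
      rw [hrectdef, volume_pi_pi, Fin.prod_univ_two]
      simp only [Matrix.cons_val_zero, Matrix.cons_val_one, Matrix.head_cons, Real.volume_Ioo]
      rw [show t*N - -(t*N) = 2*(t*N) from by ring, show ρ - -ρ = 2*ρ from by ring]
    have hdetψ : LinearMap.det ψ = M.det := by
      rw [hψdef, LinearMap.det_toLin', Matrix.det_transpose]
    have hvs : volume s = ENNReal.ofReal |M.det| * volume rect := by
      rw [hsdef, Measure.addHaar_image_linearMap, hdetψ]
    -- the main size estimate
    have hgt : gramVol b < t^2 * (N * σ) := by
      have hn0 : (n:ℝ) ≠ 0 := Nat.cast_ne_zero.2 hn.ne'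
      have h1 : T^2 < t^2 := by
        have h := mul_self_lt_mul_self hT0 ht
        rw [← pow_two, ← pow_two] at h
        exact h
      have hRnn : 0 ≤ gramVol b := by rw [hGV]; exact Real.sqrt_nonneg _
      have hT2 : T ^ 2 * (N * σ) = gramVol b := by
        rw [hTdef, hσdef, mul_pow, Real.sq_sqrt hRnn,
          ← Real.rpow_natCast (N ^ ((1 - (n:ℝ)) / (2 * (n:ℝ)))) 2, ← Real.rpow_mul hN.le,
          show N * N ^ (-1/(n:ℝ)) = N ^ (1 + -1/(n:ℝ)) from by rw [Real.rpow_add hN, Real.rpow_one]]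
        rw [mul_comm (N ^ (((1 - (n:ℝ)) / (2 * (n:ℝ))) * (2:ℕ))) (gramVol b), mul_assoc,
          ← Real.rpow_add hN,
          show ((1 - (n:ℝ)) / (2 * (n:ℝ))) * (2:ℕ) + (1 + -1/(n:ℝ)) = 0 from by
            push_cast; field_simp; ring,
          Real.rpow_zero, mul_one]
      calc gramVol b = T^2*(N*σ) := hT2.symm
        _ < t^2*(N*σ) := mul_lt_mul_of_pos_right h1 (mul_pos hN hσ)
    have hreal : 4 < |M.det| * ((2*(t*N)) * (2*ρ)) := by
      have h2 : Real.sqrt U / Real.sqrt G.det * ((2*(t*N)) * (2*ρ))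
          ≤ |M.det| * ((2*(t*N)) * (2*ρ)) :=
        mul_le_mul_of_nonneg_right hdetM (by positivity)
      have h3 : Real.sqrt U / Real.sqrt G.det * ((2*(t*N)) * (2*ρ))
          = 4 * (t^2 * (N*σ)) / Real.sqrt G.det := by
        rw [hρdef]; field_simp; ring
      have h4 : 4 < 4 * (t^2*(N*σ)) / Real.sqrt G.det := by
        rw [lt_div_iff₀ hsG]
        have h5 := hgt
        rw [hGV] at h5
        nlinarith [h5]
      calc (4:ℝ) < 4 * (t^2*(N*σ)) / Real.sqrt G.det := h4
        _ = Real.sqrt U / Real.sqrt G.det * ((2*(t*N)) * (2*ρ)) := h3.symm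
        _ ≤ |M.det| * ((2*(t*N)) * (2*ρ)) := h2
    -- Minkowski
    have hfin : Module.finrank ℝ (Fin 2 → ℝ) = 2 := by
      simp [Module.finrank_pi]
    have fund := ZSpan.isAddFundamentalDomain' (Pi.basisFun ℝ (Fin 2)) volume
    have hvF : volume (ZSpan.fundamentalDomain (Pi.basisFun ℝ (Fin 2))) = 1 := by
      rw [ZSpan.volume_fundamentalDomain]
      have hone : (Matrix.of ⇑(Pi.basisFun ℝ (Fin 2))) = 1 := by
        ext i j
        simp [Pi.basisFun_apply, Matrix.one_apply, Pi.single_apply, eq_comm]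
      rw [hone, Matrix.det_one]
      simp
    have hmeas : volume (ZSpan.fundamentalDomain (Pi.basisFun ℝ (Fin 2))) *
        2 ^ Module.finrank ℝ (Fin 2 → ℝ) < volume s := by
      rw [hvF, hfin, one_mul, hvs, hvrect, ← ENNReal.ofReal_mul (by positivity : (0:ℝ) ≤ 2*(t*N)),
        ← ENNReal.ofReal_mul (abs_nonneg _)]
      have h24 : ((2:ENNReal)^2) = ENNReal.ofReal 4 := by
        rw [ENNReal.ofReal_ofNat]
        norm_num
      rw [h24]
      exact (ENNReal.ofReal_lt_ofReal_iff (lt_trans (by norm_num) hreal)).2 hreal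
    haveI : Countable (Submodule.span ℤ (Set.range ⇑(Pi.basisFun ℝ (Fin 2)))).toAddSubgroup :=
      inferInstanceAs (Countable (Submodule.span ℤ (Set.range ⇑(Pi.basisFun ℝ (Fin 2)))))
    obtain ⟨x, hxne, hxs⟩ :=
      exists_ne_zero_mem_lattice_of_measure_mul_two_pow_lt_measure fund hsymm hconv hmeas
    -- x has integer coordinates
    have hxint : ∀ i, ∃ a : ℤ, (x : Fin 2 → ℝ) i = a := by
      intro i
      have hxmem : (x : Fin 2 → ℝ) ∈ Submodule.span ℤ (Set.range ⇑(Pi.basisFun ℝ (Fin 2))) := x.2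
      rw [Module.Basis.mem_span_iff_repr_mem] at hxmem
      obtain ⟨a, ha⟩ := hxmem i
      exact ⟨a, by simpa [Pi.basisFun_repr] using ha.symm⟩
    obtain ⟨y, hyrect, hyx⟩ := hxs
    set v : EuclideanSpace ℝ (Fin (n+1)) := φ (x : Fin 2 → ℝ) with hvdef
    have hvmem : v ∈ t • cyl n ξ N σ := by
      rw [hvdef, ← hyx]
      exact hmem y hyrect
    have hvint : IsIntPoint v := by
      intro i
      obtain ⟨a0, ha0⟩ := hxint 0
      obtain ⟨a1, ha1⟩ := hxint 1
      obtain ⟨c0, hc0⟩ := hbint 0 i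
      obtain ⟨c1, hc1⟩ := hbint 1 i
      refine ⟨a0 * c0 + a1 * c1, ?_⟩
      have hvi : v i = (x : Fin 2 → ℝ) 0 * b 0 i + (x : Fin 2 → ℝ) 1 * b 1 i := rfl
      rw [hvi, ha0, ha1, hc0, hc1]
      push_cast
      ring
    have hvne : v ≠ 0 := by
      intro h
      have hz := Fintype.linearIndependent_iff.1 hbli (x : Fin 2 → ℝ)
        (by rw [Fin.sum_univ_two]; exact h)
      exact hxne (Subtype.ext (funext fun i => hz i))
    exact ⟨fun _ => v, linearIndependent_unique_iff.2 hvne,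
      fun i => ⟨hvint, hvmem⟩⟩



  have hsub : Set.Ioi T ⊆ {t : ℝ | 0 < t ∧ ∃ v : Fin 1 → EuclideanSpace ℝ (Fin (n+1)),
      LinearIndependent ℝ v ∧ ∀ i, IsIntPoint (v i) ∧
        v i ∈ t • cyl n ξ N (N ^ (-1 / (n : ℝ)))} := fun t htt => key t htt
  have hbdd : BddBelow {t : ℝ | 0 < t ∧ ∃ v : Fin 1 → EuclideanSpace ℝ (Fin (n+1)),
      LinearIndependent ℝ v ∧ ∀ i, IsIntPoint (v i) ∧
        v i ∈ t • cyl n ξ N (N ^ (-1 / (n : ℝ)))} := ⟨0, fun r hr => hr.1.le⟩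
  calc mu n 1 ξ N ≤ sInf (Set.Ioi T) := csInf_le_csInf hbdd ⟨T + 1, lt_add_one T⟩ hsub
    _ = T := csInf_Ioi
end
end

section
/- Let Γ be a two-dimensional complete sublattice of Z^{n+1} with fundamental volume R and let ρ(Γ) > 0 be the distance from span(Γ) to Z^{n+1}\Γ. Suppose ξ = (1,ξ_1,...,ξ_n) ∈ span(Γ). Then for every N ≥ max((2(t+1)/ρ(Γ))^n, (2(t+1)R^{1/2})^{2n/(n−1)}) (with t ≥ 0 an integer and n ≥ 2), one has μ_1(ξ,N) ≤ 1/(2(t+1)) and μ_3(ξ,N) ≥ 2(t+1). -/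
open scoped Pointwise
open MeasureTheory Filter

noncomputable section

open scoped Pointwise in
lemma mem_smul_cyl (n : ℕ) (ξ : Fin n → ℝ) {Q σ τ : ℝ} (hτ : 0 < τ)
    (z : EuclideanSpace ℝ (Fin (n+1))) :
    z ∈ τ • cyl n ξ Q σ ↔ |z 0| < τ * Q ∧ Real.sqrt (∑ j, (z j.succ - ξ j * z 0) ^ 2) < τ * σ := by
  rw [Set.mem_smul_set_iff_inv_smul_mem₀ hτ.ne']
  have hz : ∀ i, (τ⁻¹ • z) i = τ⁻¹ * z i := fun i => rfl
  unfold cyl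
  simp only [Set.mem_setOf_eq, hz]
  have h1 : ∀ j : Fin n, (τ⁻¹ * z j.succ - ξ j * (τ⁻¹ * z 0)) ^ 2
      = τ⁻¹ ^ 2 * (z j.succ - ξ j * z 0) ^ 2 := fun j => by ring
  simp_rw [h1, ← Finset.mul_sum, abs_mul, abs_inv, abs_of_pos hτ,
    Real.sqrt_mul (sq_nonneg _), Real.sqrt_sq (inv_nonneg.2 hτ.le)]
  rw [inv_mul_lt_iff₀ hτ, inv_mul_lt_iff₀ hτ]

section Helpers
open Submodule Set Fintype
open scoped RealInnerProductSpace Pointwise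

lemma isIntPoint_of_mem_zspan {m k : ℕ} {b : Fin k → EuclideanSpace ℝ (Fin m)}
    (hb : ∀ i, IsIntPoint (b i)) {z : EuclideanSpace ℝ (Fin m)}
    (hz : z ∈ span ℤ (Set.range b)) : IsIntPoint z := by
  induction hz using Submodule.span_induction with
  | mem x hx => obtain ⟨i, rfl⟩ := hx; exact hb i
  | zero => exact fun j => ⟨0, by simp⟩
  | add x y _ _ hx hy =>
      intro j
      obtain ⟨p, hp⟩ := hx j; obtain ⟨q, hq⟩ := hy j
      exact ⟨p + q, by rw [PiLp.add_apply, hp, hq]; push_cast; ring⟩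
  | smul g x _ hx =>
      intro j
      obtain ⟨p, hp⟩ := hx j
      exact ⟨g * p, by rw [PiLp.smul_apply, hp]; push_cast [zsmul_eq_mul]; ring⟩

lemma exists_small_point (n : ℕ) (b : Fin 2 → EuclideanSpace ℝ (Fin (n+1)))
    (hbint : ∀ i, IsIntPoint (b i)) (hbli : LinearIndependent ℝ b)
    (ξ : Fin n → ℝ) (hξ : embed n ξ ∈ span ℝ (Set.range b))
    (Q σ : ℝ) (hQ : 0 < Q) (hσ : 0 < σ) (harea : gramVol b < Q * σ) :
    ∃ z : EuclideanSpace ℝ (Fin (n+1)), IsIntPoint z ∧ z ≠ 0 ∧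
      |z 0| < Q ∧ Real.sqrt (∑ j, (z j.succ - ξ j * z 0) ^ 2) < σ := by
  classical
  obtain ⟨f, hf⟩ := (mem_span_range_iff_exists_fun ℝ ).1 hξ
  set α := f 0 with hα
  set β := f 1 with hβ
  have hf2 : α • b 0 + β • b 1 = embed n ξ := by rw [← hf, Fin.sum_univ_two]
  set x₀ := b 0 0 with hx₀
  set x₁ := b 1 0 with hx₁
  have hembed0 : embed n ξ 0 = 1 := by simp [embed]
  have hembedsucc : ∀ j : Fin n, embed n ξ j.succ = ξ j := fun j => by simp [embed]
  have hone : α * x₀ + β * x₁ = 1 := by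
    have := congrFun (congrArg (fun (w : EuclideanSpace ℝ (Fin (n+1))) => (w : Fin (n+1) → ℝ)) hf2) 0
    simpa [hembed0] using this
  set u : EuclideanSpace ℝ (Fin (n+1)) := x₁ • b 0 - x₀ • b 1 with hu
  have hu0 : u 0 = 0 := by simp [hu, PiLp.sub_apply, PiLp.smul_apply, smul_eq_mul]; ring
  have hb0 : b 0 = x₀ • embed n ξ + β • u := by
    have h : x₀ • (α • b 0 + β • b 1) + β • (x₁ • b 0 - x₀ • b 1) = (α * x₀ + β * x₁) • b 0 := by
      module
    rw [hf2] at h; rw [← hu] at h; rw [hone, one_smul] at h; exact h.symm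
  have hb1 : b 1 = x₁ • embed n ξ - α • u := by
    have h : x₁ • (α • b 0 + β • b 1) - α • (x₁ • b 0 - x₀ • b 1) = (α * x₀ + β * x₁) • b 1 := by
      module
    rw [hf2] at h; rw [← hu] at h; rw [hone, one_smul] at h; exact h.symm
  have hune : u ≠ 0 := by
    intro h
    have h2 := Fintype.linearIndependent_iff.1 hbli ![x₁, -x₀] (by
      rw [Fin.sum_univ_two]
      simpa [neg_smul, ← sub_eq_add_neg] using h)
    have e0 : x₁ = 0 := h2 0
    have e1 : x₀ = 0 := by have := h2 1; simpa [neg_eq_zero] using this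
    rw [e0, e1] at hone; norm_num at hone
  -- Gram determinant identity
  set ξv := embed n ξ with hξv
  have hD : Matrix.det (Matrix.of fun i j => (@inner ℝ _ _ (b i) (b j)))
      = ⟪ξv, ξv⟫ * ⟪u, u⟫ - ⟪ξv, u⟫ ^ 2 := by
    rw [Matrix.det_fin_two]
    simp only [Matrix.of_apply]
    rw [hb0, hb1]
    simp only [inner_add_left, inner_add_right, inner_sub_left, inner_sub_right,
      real_inner_smul_left, real_inner_smul_right]
    simp only [real_inner_comm ξv u]
    linear_combination ((α * x₀ + β * x₁) + 1) * (⟪ξv, ξv⟫ * ⟪u, u⟫ - ⟪ξv, u⟫ ^ 2) * hone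
  -- sums
  set Sξ := ∑ j, ξ j ^ 2 with hSξd
  set Su := ∑ j : Fin n, u j.succ ^ 2 with hSud
  set Si := ∑ j : Fin n, ξ j * u j.succ with hSid
  have hPP : (⟪ξv, ξv⟫ : ℝ) = 1 + Sξ := by
    rw [PiLp.inner_apply]
    simp only [RCLike.inner_apply, conj_trivial]
    rw [Fin.sum_univ_succ, hembed0, hSξd]
    simp [hembedsucc, sq]
  have hUU : (⟪u, u⟫ : ℝ) = Su := by
    rw [PiLp.inner_apply]
    simp only [RCLike.inner_apply, conj_trivial]
    rw [Fin.sum_univ_succ, hu0, hSud]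
    simp [sq]
  have hIP : (⟪ξv, u⟫ : ℝ) = Si := by
    rw [PiLp.inner_apply]
    simp only [RCLike.inner_apply, conj_trivial]
    rw [Fin.sum_univ_succ, hu0, hSid]
    simp [hembedsucc]
    exact Finset.sum_congr rfl fun _ _ => mul_comm _ _
  have hSξ0 : 0 ≤ Sξ := Finset.sum_nonneg fun j _ => sq_nonneg _
  have hCS : Si ^ 2 ≤ Sξ * Su := Finset.sum_mul_sq_le_sq_mul_sq _ _ _
  have hSu0 : 0 < Su := by
    rcases lt_or_eq_of_le (Finset.sum_nonneg fun (j : Fin n) (_ : j ∈ Finset.univ) =>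
      sq_nonneg (u j.succ)) with h | h
    · exact h
    · exfalso
      apply hune
      have hz := (Finset.sum_eq_zero_iff_of_nonneg fun (j : Fin n) (_ : j ∈ Finset.univ) =>
        sq_nonneg (u j.succ)).1 h.symm
      apply PiLp.ext; intro i
      induction i using Fin.cases with
      | zero => exact hu0
      | succ j => exact pow_eq_zero_iff (by norm_num) |>.1 (hz j (Finset.mem_univ j))
  have hDge : Su ≤ (Matrix.of fun i j => (@inner ℝ _ _ (b i) (b j))).det := by
    rw [hD, hPP, hUU, hIP]; nlinarith [hCS, hSξ0, hSu0.le]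
  set r := Real.sqrt Su with hrd
  have hrpos : 0 < r := Real.sqrt_pos.2 hSu0
  have hrR : r ≤ gramVol b := Real.sqrt_le_sqrt hDge
  have hrQσ : r < Q * σ := lt_of_le_of_lt hrR harea
  -- Minkowski in ℝ²
  set c : Fin 2 → (Fin 2 → ℝ) := ![![x₀, β], ![x₁, -α]] with hcd
  set ψ : (Fin 2 → ℝ) →ₗ[ℝ] EuclideanSpace ℝ (Fin (n+1)) :=
    (LinearMap.proj 0).smulRight ξv + (LinearMap.proj 1).smulRight u with hψd
  have hψap : ∀ w : Fin 2 → ℝ, ψ w = w 0 • ξv + w 1 • u := fun w => rfl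
  have hψc0 : ψ (c 0) = b 0 := by
    rw [show c 0 = ![x₀, β] from rfl, hψap]
    simp only [Matrix.cons_val_zero, Matrix.cons_val_one, Matrix.head_cons]
    exact hb0.symm
  have hψc1 : ψ (c 1) = b 1 := by
    rw [show c 1 = ![x₁, -α] from rfl, hψap]
    simp only [Matrix.cons_val_zero, Matrix.cons_val_one, Matrix.head_cons]
    rw [neg_smul, ← sub_eq_add_neg]
    exact hb1.symm
  have hψc : ∀ i, ψ (c i) = b i := by
    intro i; fin_cases i
    · exact hψc0
    · exact hψc1
  have hcli : LinearIndependent ℝ c := by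
    apply LinearIndependent.of_comp ψ
    have h : ⇑ψ ∘ c = b := funext hψc
    rw [h]; exact hbli
  obtain ⟨cb, hcb⟩ : ∃ cb : Module.Basis (Fin 2) ℝ (Fin 2 → ℝ), ⇑cb = c :=
    ⟨basisOfLinearIndependentOfCardEqFinrank hcli (by simp [Module.finrank_fin_fun]),
      coe_basisOfLinearIndependentOfCardEqFinrank hcli _⟩
  set r' : Fin 2 → ℝ := ![Q, σ / r] with hr'd
  set s : Set (Fin 2 → ℝ) := Set.univ.pi fun i => Set.Ioo (-(r' i)) (r' i) with hsd
  haveI hcnt : Countable ↥(span ℤ (Set.range ⇑cb)) :=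
    Countable.of_equiv _ (Module.Basis.restrictScalars ℤ cb).repr.toEquiv.symm
  haveI hcnt' : Countable ↥(span ℤ (Set.range ⇑cb)).toAddSubgroup := hcnt
  have fund := ZSpan.isAddFundamentalDomain' cb volume
  have hsymm : ∀ w ∈ s, -w ∈ s := by
    intro w hw i _
    have := hw i (Set.mem_univ i)
    simp only [Set.mem_Ioo] at this ⊢
    constructor <;> simp only [Pi.neg_apply] <;> linarith [this.1, this.2]
  have hconv : Convex ℝ s := convex_pi fun i _ => convex_Ioo _ _
  have hvol : volume (ZSpan.fundamentalDomain cb) * 2 ^ Module.finrank ℝ (Fin 2 → ℝ)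
      < volume s := by
    have hdet : (Matrix.of ⇑cb).det = -1 := by
      rw [Matrix.det_fin_two]
      simp only [Matrix.of_apply, hcb]
      rw [show c 0 = ![x₀, β] from rfl, show c 1 = ![x₁, -α] from rfl]
      simp only [Matrix.cons_val_zero, Matrix.cons_val_one, Matrix.head_cons]
      linarith [hone]
    rw [ZSpan.volume_fundamentalDomain, Module.finrank_fin_fun, hdet, hsd, volume_pi_pi]
    simp only [Real.volume_Ioo, Fin.prod_univ_two]
    rw [show r' 0 = Q from rfl, show r' 1 = σ / r from rfl]
    rw [show Q - -Q = 2 * Q by ring, show σ / r - -(σ / r) = 2 * (σ / r) by ring]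
    rw [← ENNReal.ofReal_mul (by linarith : (0:ℝ) ≤ 2 * Q)]
    have h4 : (4:ℝ) < 2 * Q * (2 * (σ / r)) := by
      rw [show 2 * Q * (2 * (σ / r)) = 4 * (Q * σ) / r by ring, lt_div_iff₀ hrpos]
      linarith [hrQσ]
    calc ENNReal.ofReal |(-1:ℝ)| * 2 ^ 2 = ENNReal.ofReal 4 := by
          norm_num
      _ < ENNReal.ofReal (2 * Q * (2 * (σ / r))) := by
          rw [ENNReal.ofReal_lt_ofReal_iff (by linarith)]
          exact h4
  obtain ⟨x, hxne, hxs⟩ :=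
    MeasureTheory.exists_ne_zero_mem_lattice_of_measure_mul_two_pow_lt_measure
      (μ := volume) fund hsymm hconv hvol
  set w : Fin 2 → ℝ := (x : Fin 2 → ℝ) with hwd
  have hwmem : w ∈ span ℤ (Set.range ⇑cb) := x.2
  have hw0 : |w 0| < Q := by
    have h : w 0 ∈ Set.Ioo (-Q) Q := by simpa [hr'd] using hxs 0 (Set.mem_univ 0)
    exact abs_lt.2 ⟨h.1, h.2⟩
  have hw1 : |w 1| < σ / r := by
    have h : w 1 ∈ Set.Ioo (-(σ / r)) (σ / r) := by simpa [hr'd] using hxs 1 (Set.mem_univ 1)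
    exact abs_lt.2 ⟨h.1, h.2⟩
  have hmaps : ∀ v ∈ span ℤ (Set.range ⇑cb), ψ v ∈ span ℤ (Set.range b) := by
    intro v hv
    induction hv using Submodule.span_induction with
    | mem v hv =>
        obtain ⟨i, rfl⟩ := hv
        rw [hcb, hψc i]
        exact Submodule.subset_span (Set.mem_range_self i)
    | zero => rw [map_zero]; exact Submodule.zero_mem _
    | add a b' _ _ ha hb' => rw [map_add]; exact Submodule.add_mem _ ha hb'
    | smul g a _ ha => rw [map_zsmul]; exact Submodule.smul_mem _ g ha
  have hzmem : ψ w ∈ span ℤ (Set.range b) := hmaps w hwmem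
  have hz0 : ψ w 0 = w 0 := by
    rw [hψap]
    simp only [PiLp.add_apply, PiLp.smul_apply, smul_eq_mul, hembed0, hu0]
    ring
  refine ⟨ψ w, isIntPoint_of_mem_zspan hbint hzmem, ?_, ?_, ?_⟩
  · intro h
    have hw00 : w 0 = 0 := by rw [← hz0, h]; rfl
    have hww : w 1 • u = 0 := by
      have := hψap w
      rw [h, hw00, zero_smul, zero_add] at this
      exact this.symm
    have hw10 : w 1 = 0 := by
      rcases smul_eq_zero.1 hww with h' | h'
      · exact h'
      · exact absurd h' hune
    apply hxne
    have : w = 0 := by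
      funext i; fin_cases i
      · exact hw00
      · exact hw10
    exact Subtype.ext this
  · rw [hz0]; exact hw0
  · have hterm : ∀ j : Fin n, (ψ w j.succ - ξ j * ψ w 0) ^ 2 = w 1 ^ 2 * u j.succ ^ 2 := by
      intro j
      rw [hz0, hψap]
      simp only [PiLp.add_apply, PiLp.smul_apply, smul_eq_mul, hembedsucc]
      ring
    rw [Finset.sum_congr rfl fun j _ => hterm j, ← Finset.mul_sum, ← hSud,
      Real.sqrt_mul (sq_nonneg _), Real.sqrt_sq_eq_abs, ← hrd]
    calc |w 1| * r < (σ / r) * r := by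
          exact mul_lt_mul_of_pos_right hw1 hrpos
      _ = σ := div_mul_cancel₀ σ hrpos.ne'

end Helpers

set_option maxHeartbeats 1000000

theorem lemmaB_combined (n : ℕ) (hn : 2 ≤ n)
    (b : Fin 2 → EuclideanSpace ℝ (Fin (n+1))) (hbint : ∀ i, IsIntPoint (b i))
    (hbli : LinearIndependent ℝ b) (hbcomp : IsCompleteLat b)
    (ξ : Fin n → ℝ) (hξ : embed n ξ ∈ Submodule.span ℝ (Set.range b))
    (ρ : ℝ) (hρ : ρ = sInf {d : ℝ | ∃ z : EuclideanSpace ℝ (Fin (n+1)), IsIntPoint z ∧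
      z ∉ Submodule.span ℤ (Set.range b) ∧
      d = Metric.infDist z (Submodule.span ℝ (Set.range b) : Set _)}) (hρpos : 0 < ρ)
    (t : ℕ) (N : ℝ)
    (hN : max ((2 * ((t : ℝ) + 1) / ρ) ^ (n : ℕ))
      ((2 * ((t : ℝ) + 1) * Real.sqrt (gramVol b)) ^ (2 * (n : ℝ) / ((n : ℝ) - 1))) ≤ N) :
    mu n 1 ξ N ≤ 1 / (2 * ((t : ℝ) + 1)) ∧ 2 * ((t : ℝ) + 1) ≤ mu n 3 ξ N := by
  classical
  have hn2 : (2:ℝ) ≤ (n:ℝ) := by exact_mod_cast hn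
  have hnpos : (0:ℝ) < (n:ℝ) := by linarith
  have hn1 : (0:ℝ) < (n:ℝ) - 1 := by linarith
  have htpos : (0:ℝ) < 2 * ((t:ℝ) + 1) := by positivity
  have hNn : (2 * ((t:ℝ)+1) / ρ) ^ (n:ℕ) ≤ N := le_trans (le_max_left _ _) hN
  have hNr : (2 * ((t:ℝ)+1) * Real.sqrt (gramVol b)) ^ (2 * (n:ℝ) / ((n:ℝ)-1)) ≤ N :=
    le_trans (le_max_right _ _) hN
  have hNpos : 0 < N := lt_of_lt_of_le (by positivity) hNn
  have hroot : 2 * ((t:ℝ)+1) / ρ ≤ N ^ ((1:ℝ)/(n:ℝ)) := by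
    have h1 : ((2 * ((t:ℝ)+1) / ρ) ^ (n:ℕ)) ^ ((1:ℝ)/(n:ℝ)) ≤ N ^ ((1:ℝ)/(n:ℝ)) :=
      Real.rpow_le_rpow (by positivity) hNn (by positivity)
    rwa [← Real.rpow_natCast (2 * ((t:ℝ)+1) / ρ) n, ← Real.rpow_mul (by positivity),
      mul_one_div, div_self (by linarith : (n:ℝ) ≠ 0), Real.rpow_one] at h1
  have hmulroot : N ^ (-1/(n:ℝ)) * N ^ ((1:ℝ)/(n:ℝ)) = 1 := by
    rw [← Real.rpow_add hNpos, show (-1/(n:ℝ) + (1:ℝ)/(n:ℝ)) = 0 by ring, Real.rpow_zero]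
  have hσpos : 0 < N ^ (-1/(n:ℝ)) := Real.rpow_pos_of_pos hNpos _
  have hrootpos : 0 < N ^ ((1:ℝ)/(n:ℝ)) := Real.rpow_pos_of_pos hNpos _
  have hR0 : 0 ≤ gramVol b := Real.sqrt_nonneg _
  constructor
  · -- μ₁ bound
    have hbdd : BddBelow {τ : ℝ | 0 < τ ∧ ∃ v : Fin 1 → EuclideanSpace ℝ (Fin (n+1)),
        LinearIndependent ℝ v ∧ ∀ i, IsIntPoint (v i) ∧
          v i ∈ τ • cyl n ξ N (N ^ (-1 / (n:ℝ)))} := ⟨0, fun τ hτ => hτ.1.le⟩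
    have hNp : (4*((t:ℝ)+1)^2) * gramVol b ≤ N ^ (((n:ℝ)-1)/(n:ℝ)) := by
      have h1 : ((2 * ((t:ℝ)+1) * Real.sqrt (gramVol b)) ^ (2 * (n:ℝ) / ((n:ℝ)-1)))
            ^ (((n:ℝ)-1)/(n:ℝ)) ≤ N ^ (((n:ℝ)-1)/(n:ℝ)) :=
        Real.rpow_le_rpow (Real.rpow_nonneg (by positivity) _) hNr (by positivity)
      rw [← Real.rpow_mul (by positivity)] at h1
      rw [show 2 * (n:ℝ) / ((n:ℝ)-1) * (((n:ℝ)-1)/(n:ℝ)) = 2 by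
        field_simp] at h1
      rw [show ((2:ℝ)) = ((2:ℕ):ℝ) by norm_num, Real.rpow_natCast] at h1
      calc (4*((t:ℝ)+1)^2) * gramVol b
          = (2 * ((t:ℝ)+1) * Real.sqrt (gramVol b)) ^ (2:ℕ) := by
            rw [mul_pow, Real.sq_sqrt hR0]
            ring
        _ ≤ N ^ (((n:ℝ)-1)/(n:ℝ)) := h1
    refine le_of_forall_pos_le_add ?_
    intro ε hε
    set τ : ℝ := 1/(2*((t:ℝ)+1)) + ε with hτdef
    have hτpos : 0 < τ := by positivity
    have hNN : N * N ^ (-1/(n:ℝ)) = N ^ (((n:ℝ)-1)/(n:ℝ)) := by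
      rw [show (((n:ℝ)-1)/(n:ℝ)) = 1 + (-1/(n:ℝ)) by field_simp; ring,
        Real.rpow_add hNpos, Real.rpow_one]
    have harea : gramVol b < (τ*N) * (τ*(N ^ (-1/(n:ℝ)))) := by
      have he : (τ*N) * (τ*(N ^ (-1/(n:ℝ)))) = τ^2 * N ^ (((n:ℝ)-1)/(n:ℝ)) := by
        rw [show (τ*N) * (τ*(N ^ (-1/(n:ℝ)))) = τ^2 * (N * N ^ (-1/(n:ℝ))) by ring, hNN]
      rw [he]
      have hNppos : 0 < N ^ (((n:ℝ)-1)/(n:ℝ)) := Real.rpow_pos_of_pos hNpos _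
      have hc2 : gramVol b ≤ (1/(2*((t:ℝ)+1)))^2 * N ^ (((n:ℝ)-1)/(n:ℝ)) := by
        have h2 := mul_le_mul_of_nonneg_left hNp (sq_nonneg (1/(2*((t:ℝ)+1))))
        calc gramVol b = (1/(2*((t:ℝ)+1)))^2 * ((4*((t:ℝ)+1)^2) * gramVol b) := by
              field_simp; ring
          _ ≤ _ := h2
      have hττ : (1/(2*((t:ℝ)+1)))^2 < τ^2 := by
        rw [hτdef]
        nlinarith [hε, (by positivity : (0:ℝ) < 1/(2*((t:ℝ)+1)))]
      nlinarith [hNppos]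
    obtain ⟨z, hzint, hzne, hz0, hzs⟩ := exists_small_point n b hbint hbli ξ hξ
      (τ*N) (τ*(N ^ (-1/(n:ℝ)))) (by positivity) (by positivity) harea
    have hmem : τ ∈ {τ : ℝ | 0 < τ ∧ ∃ v : Fin 1 → EuclideanSpace ℝ (Fin (n+1)),
        LinearIndependent ℝ v ∧ ∀ i, IsIntPoint (v i) ∧
          v i ∈ τ • cyl n ξ N (N ^ (-1 / (n:ℝ)))} := by
      refine ⟨hτpos, fun _ => z, linearIndependent_unique_iff.2 hzne, fun i => ⟨hzint, ?_⟩⟩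
      exact (mem_smul_cyl n ξ hτpos z).2 ⟨hz0, hzs⟩
    exact csInf_le hbdd hmem
  · -- μ₃ bound
    -- nonemptiness of the set
    set B := Real.sqrt (∑ j, ξ j ^ 2) with hB
    have hB0 : 0 ≤ B := Real.sqrt_nonneg _
    set τ₀ : ℝ := (1 + B) * (N⁻¹ + N ^ ((1:ℝ)/(n:ℝ))) with hτ₀
    have hτ₀pos : 0 < τ₀ := by positivity
    have hτ₀N : 1 < τ₀ * N := by
      have h1 : τ₀ * N = (1+B) * (1 + N ^ ((1:ℝ)/(n:ℝ)) * N) := by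
        rw [hτ₀]; field_simp
      nlinarith [mul_pos hrootpos hNpos, hB0]
    have hτ₀σ : max 1 B < τ₀ * N ^ (-1/(n:ℝ)) := by
      have h1 : τ₀ * N ^ (-1/(n:ℝ)) = (1+B) * (N⁻¹ * N ^ (-1/(n:ℝ)) + 1) := by
        rw [hτ₀, show ((1:ℝ)+B) * (N⁻¹ + N ^ ((1:ℝ)/(n:ℝ))) * N ^ (-1/(n:ℝ))
          = (1+B) * (N⁻¹ * N ^ (-1/(n:ℝ)) + N ^ (-1/(n:ℝ)) * N ^ ((1:ℝ)/(n:ℝ))) by ring,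
          hmulroot]
      rw [h1, max_lt_iff]
      constructor <;> nlinarith [mul_pos (inv_pos.2 hNpos) hσpos, hB0]
    have hkne : ∀ (m : ℕ) (hm : m < n + 1) (hm0 : m ≠ 0), ((⟨m, hm⟩ : Fin (n+1)) ≠ 0) := by
      intro m hm hm0
      simp [Fin.ext_iff, hm0]
    have hsingle_int : ∀ (k : Fin (n+1)), IsIntPoint (EuclideanSpace.single k (1:ℝ)) := by
      intro k j
      by_cases h : j = k
      · exact ⟨1, by simp [EuclideanSpace.single_apply, h]⟩
      · exact ⟨0, by simp [EuclideanSpace.single_apply, h]⟩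
    have hgen : ∀ k : Fin (n+1), k ≠ 0 →
        (EuclideanSpace.single k (1:ℝ)) 0 = 0 ∧
        Real.sqrt (∑ j : Fin n, ((EuclideanSpace.single k (1:ℝ)) j.succ
          - ξ j * (EuclideanSpace.single k (1:ℝ)) 0) ^ 2) = 1 := by
      intro k hk
      have h0 : (EuclideanSpace.single k (1:ℝ)) 0 = 0 := by
        rw [EuclideanSpace.single_apply]
        simp [Ne.symm hk]
      refine ⟨h0, ?_⟩
      have hterm : ∀ j : Fin n, ((EuclideanSpace.single k (1:ℝ)) j.succ
          - ξ j * (EuclideanSpace.single k (1:ℝ)) 0) ^ 2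
          = if j = k.pred hk then 1 else 0 := by
        intro j
        rw [h0, EuclideanSpace.single_apply]
        by_cases hj : j = k.pred hk
        · have : j.succ = k := by rw [hj, Fin.succ_pred]
          simp [this, hj]
        · have : j.succ ≠ k := by
            intro hcon
            apply hj
            have h2 : j.1 + 1 = k.1 := by
              simpa [Fin.val_succ] using congrArg Fin.val hcon
            apply Fin.ext
            rw [Fin.coe_pred]
            omega
          simp [this, hj]
      rw [Finset.sum_congr rfl fun j _ => hterm j, Finset.sum_ite_eq' Finset.univ _ (fun _ => (1:ℝ))]
      simp
    have hvne : ∀ i : Fin 3, ((⟨i.1, by omega⟩ : Fin (n+1)) : Fin (n+1)).1 = i.1 := fun i => rfl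
    set v : Fin 3 → EuclideanSpace ℝ (Fin (n+1)) :=
      fun i => EuclideanSpace.single (⟨i.1, by omega⟩ : Fin (n+1)) (1:ℝ) with hv
    have hvli : LinearIndependent ℝ v := by
      have hinj : Function.Injective (fun i : Fin 3 => (⟨i.1, by omega⟩ : Fin (n+1))) := by
        intro a b' hab
        have : a.1 = b'.1 := by
          have := congrArg Fin.val hab
          simpa using this
        exact Fin.ext this
      have hli := (EuclideanSpace.basisFun (Fin (n+1)) ℝ).toBasis.linearIndependent.comp _ hinj
      have : (⇑(EuclideanSpace.basisFun (Fin (n+1)) ℝ).toBasis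
          ∘ fun i : Fin 3 => (⟨i.1, by omega⟩ : Fin (n+1))) = v := by
        funext i
        simp [hv, Function.comp]
      rwa [this] at hli
    have hvmem : ∀ i : Fin 3, v i ∈ τ₀ • cyl n ξ N (N ^ (-1/(n:ℝ))) := by
      intro i
      rw [mem_smul_cyl n ξ hτ₀pos]
      by_cases hi : i.1 = 0
      · have hk0 : (⟨i.1, by omega⟩ : Fin (n+1)) = 0 := by
          simp [Fin.ext_iff, hi]
        have h00 : v i 0 = 1 := by
          rw [hv]
          simp only [hk0]
          rw [EuclideanSpace.single_apply]
          simp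
        constructor
        · rw [h00]; simpa using hτ₀N
        · have hsucc0 : ∀ j : Fin n, v i j.succ = 0 := by
            intro j
            rw [hv]
            simp only [hk0]
            rw [EuclideanSpace.single_apply]
            simp [Fin.succ_ne_zero]
          have : ∀ j : Fin n, (v i j.succ - ξ j * v i 0) ^ 2 = ξ j ^ 2 := by
            intro j; rw [hsucc0 j, h00]; ring
          rw [Finset.sum_congr rfl fun j _ => this j, ← hB]
          exact lt_of_le_of_lt (le_max_right 1 B) hτ₀σ
      · have hk := hkne i.1 (by omega) hi
        obtain ⟨h0, hs⟩ := hgen _ hk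
        constructor
        · rw [hv]
          simp only
          rw [h0, abs_zero]
          exact lt_trans zero_lt_one hτ₀N
        · rw [hv]
          simp only
          rw [hs]
          exact lt_of_le_of_lt (le_max_left 1 B) hτ₀σ
    have hS3ne : {τ : ℝ | 0 < τ ∧ ∃ v : Fin 3 → EuclideanSpace ℝ (Fin (n+1)),
        LinearIndependent ℝ v ∧ ∀ i, IsIntPoint (v i) ∧
          v i ∈ τ • cyl n ξ N (N ^ (-1 / (n:ℝ)))}.Nonempty :=
      ⟨τ₀, hτ₀pos, v, hvli, fun i => ⟨hsingle_int _, hvmem i⟩⟩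
    refine le_csInf hS3ne ?_
    rintro τ ⟨hτpos, w, hwli, hw⟩
    have hP2 : Module.finrank ℝ (Submodule.span ℝ (Set.range b)) = 2 := by
      rw [finrank_span_eq_card hbli]; simp
    have hex : ∃ i, w i ∉ Submodule.span ℝ (Set.range b) := by
      by_contra hcon
      push_neg at hcon
      have hle : Submodule.span ℝ (Set.range w) ≤ Submodule.span ℝ (Set.range b) :=
        Submodule.span_le.2 (Set.range_subset_iff.2 hcon)
      have h3 : Module.finrank ℝ (Submodule.span ℝ (Set.range w)) = 3 := by
        rw [finrank_span_eq_card hwli]; simp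
      have := Submodule.finrank_mono hle
      omega
    obtain ⟨i, hiP⟩ := hex
    have hint := (hw i).1
    have hcyl := (mem_smul_cyl n ξ hτpos (w i)).1 (hw i).2
    have hiZ : w i ∉ Submodule.span ℤ (Set.range b) := fun hmem =>
      hiP (Submodule.span_subset_span ℤ ℝ _ hmem)
    have hρle : ρ ≤ Metric.infDist (w i) (Submodule.span ℝ (Set.range b) : Set _) := by
      rw [hρ]
      refine csInf_le ⟨0, ?_⟩ ⟨w i, hint, hiZ, rfl⟩
      rintro d ⟨z, _, _, rfl⟩
      exact Metric.infDist_nonneg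
    have hdist : Metric.infDist (w i) (Submodule.span ℝ (Set.range b) : Set _)
        ≤ Real.sqrt (∑ j, (w i j.succ - ξ j * w i 0) ^ 2) := by
      have hmem0 : (w i 0) • embed n ξ ∈ (Submodule.span ℝ (Set.range b) : Set _) :=
        Submodule.smul_mem _ _ hξ
      refine le_trans (Metric.infDist_le_dist_of_mem hmem0) (le_of_eq ?_)
      rw [EuclideanSpace.dist_eq]
      congr 1
      rw [Fin.sum_univ_succ]
      have h0 : dist (w i 0) ((w i 0 • embed n ξ) 0) ^ 2 = 0 := by
        have : (w i 0 • embed n ξ) 0 = w i 0 := by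
          have : embed n ξ 0 = 1 := by simp [embed]
          simp [PiLp.smul_apply, smul_eq_mul, this]
        rw [this, dist_self]
        norm_num
      rw [h0, zero_add]
      refine Finset.sum_congr rfl fun j _ => ?_
      have he : (w i 0 • embed n ξ) j.succ = w i 0 * ξ j := by
        have : embed n ξ j.succ = ξ j := by simp [embed]
        simp [PiLp.smul_apply, smul_eq_mul, this]
      rw [he, Real.dist_eq, sq_abs]
      ring_nf
    have hlt : ρ < τ * N ^ (-1/(n:ℝ)) := lt_of_le_of_lt (le_trans hρle hdist) hcyl.2
    have h2 : ρ * N ^ ((1:ℝ)/(n:ℝ)) < τ := by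
      have := mul_lt_mul_of_pos_right hlt hrootpos
      rwa [mul_assoc, hmulroot, mul_one] at this
    calc 2 * ((t:ℝ)+1) = (2*((t:ℝ)+1)/ρ) * ρ := by field_simp
      _ ≤ N ^ ((1:ℝ)/(n:ℝ)) * ρ := mul_le_mul_of_nonneg_right hroot hρpos.le
      _ = ρ * N ^ ((1:ℝ)/(n:ℝ)) := by ring
      _ ≤ τ := h2.le
end
end
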